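/- Let G be a group. Then the operation a * b = b a^{-1} b makes G a quandle; the maps β_y(a) = y^{-2} a form a biquandle structure on (G, *); and the resulting operations x ⊳ y = y^{-1} x^{-1} y and x ⊲ y = y^{-2} x make G a biquandle (the Wada biquandle). -/

import Mathlib

/-- A quandle structure on a type, given by its binary operation. -/
structure IsQuandle {Q : Type*} (op : Q → Q → Q) : Prop where
  idem : ∀ x, op x x = x
  right_bij : ∀ y, Function.Bijective (fun x => op x y)
  self_distrib : ∀ x y z, op (op x y) z = op (op x z) (op y z)

/-- A biquandle structure on a type, given by its two binary operations
`ub` (`x ⊳ y`) and `ob` (`x ⊲ y`). -/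
structure IsBiquandle {B : Type*} (ub ob : B → B → B) : Prop where
  diag : ∀ x, ub x x = ob x x
  alpha_bij : ∀ y, Function.Bijective (fun x => ub x y)
  beta_bij : ∀ y, Function.Bijective (fun x => ob x y)
  S_bij : Function.Bijective (fun p : B × B => (ob p.2 p.1, ub p.1 p.2))
  exchange₁ : ∀ x y z, ub (ub x y) (ub z y) = ub (ub x z) (ob y z)
  exchange₂ : ∀ x y z, ob (ub x y) (ub z y) = ub (ob x z) (ob y z)
  exchange₃ : ∀ x y z, ob (ob x y) (ob z y) = ob (ob x z) (ub y z)

/-- A biquandle structure on the quandle `(X, op)`: a family `β` of quandle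
automorphisms such that `β_{β_y(x*y)} ∘ β_y = β_{β_x(y)} ∘ β_x` and
`y ↦ β_y(y)` is a bijection. -/
structure IsBiquandleStructure {X : Type*} (op : X → X → X) (β : X → X → X) : Prop where
  beta_bij : ∀ y, Function.Bijective (β y)
  beta_hom : ∀ y x z, β y (op x z) = op (β y x) (β y z)
  compat : ∀ x y a, β (β y (op x y)) (β y a) = β (β x y) (β x a)
  diag_bij : Function.Bijective (fun y => β y y)

/-!
A biquandle structure `β` on a quandle `(X, *)` always yields a biquandle with
`x ⊳ y = β_y(x * y)` and `x ⊲ y = β_y(x)`: each exchange law is `β_y` applied to a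
quandle identity, followed by the compatibility `β_{β_y(x*y)} ∘ β_y = β_{β_x(y)} ∘ β_x`.
Evaluated at `y`, the compatibility reads `β_v(β_y(y)) = D(β_x(y))` with `v = β_y(x*y)` and
`D(y) = β_y(y)`, so bijectivity of `D` lets one recover `(x, y)` from `(β_x(y), v)`, which
inverts the switch map. The core quandle `b a⁻¹ b` of a group with `β_y(a) = y⁻² a` is an
instance, and the resulting biquandle is Wada's.
-/

namespace IsBiquandleStructure

variable {X : Type*} {op β : X → X → X}

theorem compat_apply_self (hβ : IsBiquandleStructure op β) (x y : X) :
    β (β y (op x y)) (β y y) = β (β x y) (β x y) :=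
  hβ.compat x y y

theorem switch_injective (hQ : IsQuandle op) (hβ : IsBiquandleStructure op β) :
    Function.Injective (fun p : X × X => (β p.1 p.2, β p.2 (op p.1 p.2))) := by
  rintro ⟨x, y⟩ ⟨x', y'⟩ h
  obtain ⟨hu, hv⟩ := Prod.mk.inj h
  dsimp only at hu hv
  have hy : y = y' := by
    apply hβ.diag_bij.injective
    apply (hβ.beta_bij (β y (op x y))).injective
    dsimp only
    rw [hβ.compat_apply_self, hu, ← hβ.compat_apply_self, hv]
  subst hy
  have hx : op x y = op x' y := (hβ.beta_bij y).injective hv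
  rw [(hQ.right_bij y).injective hx]

theorem switch_surjective (hQ : IsQuandle op) (hβ : IsBiquandleStructure op β) :
    Function.Surjective (fun p : X × X => (β p.1 p.2, β p.2 (op p.1 p.2))) := by
  rintro ⟨u, v⟩
  obtain ⟨w, hw⟩ := (hβ.beta_bij v).surjective (β u u)
  obtain ⟨y, rfl⟩ := hβ.diag_bij.surjective w
  obtain ⟨t, rfl⟩ := (hβ.beta_bij y).surjective v
  obtain ⟨x, rfl⟩ := (hQ.right_bij y).surjective t
  have hu : β x y = u := hβ.diag_bij.injective (by
    dsimp only at hw ⊢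
    rw [← hβ.compat_apply_self, hw])
  exact ⟨(x, y), Prod.ext hu rfl⟩

theorem isBiquandle (hQ : IsQuandle op) (hβ : IsBiquandleStructure op β) :
    IsBiquandle (fun x y => β y (op x y)) (fun x y => β y x) where
  diag x := by rw [hQ.idem]
  alpha_bij y := (hβ.beta_bij y).comp (hQ.right_bij y)
  beta_bij := hβ.beta_bij
  S_bij := ⟨hβ.switch_injective hQ, hβ.switch_surjective hQ⟩
  exchange₁ x y z := by
    rw [← hβ.beta_hom, ← hQ.self_distrib, ← hβ.beta_hom, hβ.compat]
  exchange₂ x y z := by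
    rw [← hβ.beta_hom, hβ.compat]
  exchange₃ x y z := by
    rw [hβ.compat]

end IsBiquandleStructure

section Wada

variable (G : Type*) [Group G]

theorem isQuandle_core : IsQuandle (fun a b : G => b * a⁻¹ * b) where
  idem _ := by group
  right_bij y := Function.Involutive.bijective fun x => by group
  self_distrib _ _ _ := by group

theorem isBiquandleStructure_wada :
    IsBiquandleStructure (fun a b : G => b * a⁻¹ * b) (fun y a => y⁻¹ * y⁻¹ * a) where
  beta_bij y := Group.mulLeft_bijective (y⁻¹ * y⁻¹)
  beta_hom _ _ _ := by group
  compat _ _ _ := by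
    simp only [mul_inv_rev, inv_inv, mul_assoc, inv_mul_cancel_left, mul_inv_cancel_left]
  diag_bij := by
    convert inv_bijective (G := G) using 1
    funext y
    group

end Wada

/-- For a group `G`: the operation `a * b = b a⁻¹ b` makes `G` a quandle;
the maps `β_y(a) = y⁻² a` form a biquandle structure on it; the resulting
biquandle operations are `x ⊳ y = β_y(x * y) = y⁻¹ x⁻¹ y` and
`x ⊲ y = β_y(x) = y⁻² x`, and they make `G` a biquandle (the Wada
biquandle). -/
theorem wada_biquandle (G : Type*) [Group G] :
    IsQuandle (fun a b : G => b * a⁻¹ * b) ∧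
    IsBiquandleStructure (fun a b : G => b * a⁻¹ * b) (fun y a => y⁻¹ * y⁻¹ * a) ∧
    (∀ x y : G, y⁻¹ * y⁻¹ * (y * x⁻¹ * y) = y⁻¹ * x⁻¹ * y) ∧
    IsBiquandle (fun x y : G => y⁻¹ * x⁻¹ * y) (fun x y : G => y⁻¹ * y⁻¹ * x) := by
  have hformula : ∀ x y : G, y⁻¹ * y⁻¹ * (y * x⁻¹ * y) = y⁻¹ * x⁻¹ * y := fun _ _ => by group
  have hbiquandle := (isBiquandleStructure_wada G).isBiquandle (isQuandle_core G)
  simp only [hformula] at hbiquandle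
  exact ⟨isQuandle_core G, isBiquandleStructure_wada G, hformula, hbiquandle⟩
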